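/- The 6-dimensional solvable Lie algebra g = (0, 12, 13, 14, 15, 16), i.e. with basis e^1,…,e^6 of g* satisfying de^1 = 0 and de^i = e^1 ∧ e^i for i = 2,…,6, admits no half-flat SU(3)-structure: there is no pair (ω, ψ⁺) forming an SU(3)-structure on g with dψ⁺ = 0 and d(ω∧ω) = 0. -/

import Mathlib

/-!
Since `deⁱ = e¹ ∧ eⁱ` for every `i` (also for `i = 1`, as `e¹ ∧ e¹ = 0`), the Leibniz rule gives
`d = p • (e¹ ∧ ·)` on `p`-forms, so `d(ω ∧ ω) = 4 e¹ ∧ ω ∧ ω`. For `ω = η¹∧η² + η³∧η⁴ + η⁵∧η⁶`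
with `(ηⁱ)` a basis, wedging with `ω ∧ ω` is injective on `1`-forms: `ηʲ ∧ θ ∧ ω ∧ ω` is `±2` times
the coefficient of `θ` along the partner of `ηʲ`, times the volume form. Hence `d(ω ∧ ω) = 0`
forces `e¹ = 0`.
-/

open ExteriorAlgebra Module

/-- The standard basis covectors `e^1, …, e^6` (indexed `0,…,5`), viewed as degree-one
elements of the exterior algebra over `g* ≃ ℝ⁶`. -/
noncomputable def e (i : Fin 6) : ExteriorAlgebra ℝ (Fin 6 → ℝ) :=
  ι ℝ (Pi.single i 1)

/-- `(ω, ψ⁺)` is an SU(3)-structure on the 6-dimensional space `g*`: there is a basis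
`η¹,…,η⁶` of `g*` with `ω = η¹∧η² + η³∧η⁴ + η⁵∧η⁶` and
`ψ⁺ = Re((η¹+iη²)∧(η³+iη⁴)∧(η⁵+iη⁶)) = η¹³⁵ - η¹⁴⁶ - η²³⁶ - η²⁴⁵`. -/
def IsSU3 (ω ψ : ExteriorAlgebra ℝ (Fin 6 → ℝ)) : Prop :=
  ∃ η : Basis (Fin 6) ℝ (Fin 6 → ℝ),
    ω = ι ℝ (η 0) * ι ℝ (η 1) + ι ℝ (η 2) * ι ℝ (η 3) + ι ℝ (η 4) * ι ℝ (η 5) ∧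
    ψ = ι ℝ (η 0) * ι ℝ (η 2) * ι ℝ (η 4) - ι ℝ (η 0) * ι ℝ (η 3) * ι ℝ (η 5)
      - ι ℝ (η 1) * ι ℝ (η 2) * ι ℝ (η 5) - ι ℝ (η 1) * ι ℝ (η 3) * ι ℝ (η 4)

theorem add_add_mul_self_of_commute {A : Type*} [Ring A] {σ₁ σ₂ σ₃ : A}
    (h₁₂ : Commute σ₁ σ₂) (h₁₃ : Commute σ₁ σ₃) (h₂₃ : Commute σ₂ σ₃)
    (h₁ : σ₁ * σ₁ = 0) (h₂ : σ₂ * σ₂ = 0) (h₃ : σ₃ * σ₃ = 0) :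
    (σ₁ + σ₂ + σ₃) * (σ₁ + σ₂ + σ₃) = 2 • (σ₁ * σ₂ + σ₁ * σ₃ + σ₂ * σ₃) := by
  simp only [add_mul, mul_add, h₁, h₂, h₃, h₁₂.symm.eq, h₁₃.symm.eq, h₂₃.symm.eq]
  abel

namespace ExteriorAlgebra

variable {R M : Type*} [CommRing R] [AddCommGroup M] [Module R M]

theorem ι_mul_ι_anticomm (u w : M) : ι R u * ι R w = -(ι R w * ι R u) :=
  eq_neg_of_add_eq_zero_left (ι_add_mul_swap u w)

theorem ι_mul_left_anticomm (u w : M) (x : ExteriorAlgebra R M) :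
    ι R u * (ι R w * x) = -(ι R w * (ι R u * x)) := by
  rw [← mul_assoc, ι_mul_ι_anticomm, neg_mul, mul_assoc]

theorem ι_mul_ι_mul_ι_left_eq_zero (a b : M) : ι R a * (ι R a * ι R b) = 0 := by
  rw [← mul_assoc, ι_sq_zero, zero_mul]

theorem ι_mul_ι_mul_ι_right_eq_zero (a b : M) : ι R b * (ι R a * ι R b) = 0 := by
  rw [ι_mul_left_anticomm, ι_sq_zero, mul_zero, neg_zero]

theorem ι_mul_ι_mul_self_eq_zero (a b : M) : ι R a * ι R b * (ι R a * ι R b) = 0 := by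
  rw [mul_assoc, ι_mul_ι_mul_ι_right_eq_zero, mul_zero]

theorem commute_ι_mul_ι (a b : M) (x : ExteriorAlgebra R M) : Commute (ι R a * ι R b) x := by
  induction x using ExteriorAlgebra.induction with
  | algebraMap r => exact (Algebra.commutes' r _).symm
  | ι u =>
    show _ = _
    rw [mul_assoc, ι_mul_ι_anticomm b u, mul_neg, ← mul_assoc, ι_mul_ι_anticomm a u, neg_mul,
      neg_neg, mul_assoc]
  | mul x y hx hy => exact hx.mul_right hy
  | add x y hx hy => exact hx.add_right hy

theorem ιMulti_basis_ne_zero [Nontrivial R] {n : ℕ} (η : Basis (Fin n) R M) :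
    ιMulti R n η ≠ 0 := by
  intro h
  have := congrArg (liftAlternating (Pi.single n η.det)) h
  rw [liftAlternating_apply_ιMulti, Pi.single_eq_same, Basis.det_self, map_zero] at this
  exact one_ne_zero this

theorem map_eq_smul_ι_mul_of_mem_exteriorPower
    (d : ExteriorAlgebra R M →ₗ[R] ExteriorAlgebra R M)
    (hleib : ∀ (p : ℕ) (x : ExteriorAlgebra R M), x ∈ ⋀[R]^p M →
      ∀ y, d (x * y) = d x * y + ((-1 : R)) ^ p • (x * d y))
    (θ : M) (hd : ∀ m, d (ι R m) = ι R θ * ι R m) {p : ℕ} {x : ExteriorAlgebra R M}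
    (hx : x ∈ ⋀[R]^p M) : d x = (p : R) • (ι R θ * x) := by
  induction hx using Submodule.pow_induction_on_left' with
  | algebraMap r =>
    have hd_one : d 1 = d 1 + d 1 := by simpa using hleib 0 1 (by simp) 1
    simp [Algebra.algebraMap_eq_smul_one, left_eq_add.mp hd_one]
  | add x y i _ _ hx hy => simp [hx, hy, mul_add]
  | mem_mul m hm i x _ hx =>
    obtain ⟨m, rfl⟩ := hm
    rw [hleib 1 _ (by simp), hd, hx, pow_one, mul_smul_comm,
      ← mul_assoc, ι_mul_ι_anticomm m θ, neg_mul, mul_assoc]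
    push_cast
    module

variable (R) in
def darbouxForm (a₁ b₁ a₂ b₂ a₃ b₃ : M) : ExteriorAlgebra R M :=
  ι R a₁ * ι R b₁ + ι R a₂ * ι R b₂ + ι R a₃ * ι R b₃

section Darboux

variable (a₁ b₁ a₂ b₂ a₃ b₃ : M)

theorem darbouxForm_mem_exteriorPower_two :
    darbouxForm R a₁ b₁ a₂ b₂ a₃ b₃ ∈ ⋀[R]^2 M := by
  have hι (m : M) : ι R m ∈ ⋀[R]^1 M := by simp
  exact add_mem (add_mem (SetLike.mul_mem_graded (hι _) (hι _))
    (SetLike.mul_mem_graded (hι _) (hι _))) (SetLike.mul_mem_graded (hι _) (hι _))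

theorem ι_mul_darbouxForm_mul_self {u : M} (hu : ι R u * (ι R a₁ * ι R b₁) = 0) :
    ι R u * (darbouxForm R a₁ b₁ a₂ b₂ a₃ b₃ * darbouxForm R a₁ b₁ a₂ b₂ a₃ b₃) =
      2 • (ι R u * (ι R a₂ * ι R b₂ * (ι R a₃ * ι R b₃))) := by
  rw [darbouxForm, add_add_mul_self_of_commute (commute_ι_mul_ι _ _ _) (commute_ι_mul_ι _ _ _)
    (commute_ι_mul_ι _ _ _) (ι_mul_ι_mul_self_eq_zero _ _) (ι_mul_ι_mul_self_eq_zero _ _)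
    (ι_mul_ι_mul_self_eq_zero _ _)]
  simp only [mul_smul_comm, mul_add, ← mul_assoc, hu, zero_mul, zero_add]

theorem ι_mul_pair_mul_pair_eq_zero (x₂ y₂ x₃ y₃ : R) :
    ι R (x₂ • a₂ + y₂ • b₂ + x₃ • a₃ + y₃ • b₃) * (ι R a₂ * ι R b₂ * (ι R a₃ * ι R b₃)) = 0 := by
  have h₂ (u : M) (hu : ι R u * (ι R a₂ * ι R b₂) = 0) :
      ι R u * (ι R a₂ * ι R b₂ * (ι R a₃ * ι R b₃)) = 0 := by
    rw [← mul_assoc, hu, zero_mul]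
  have h₃ (u : M) (hu : ι R u * (ι R a₃ * ι R b₃) = 0) :
      ι R u * (ι R a₂ * ι R b₂ * (ι R a₃ * ι R b₃)) = 0 := by
    rw [(commute_ι_mul_ι a₂ b₂ _).symm.left_comm, hu, mul_zero]
  simp only [map_add, map_smul, add_mul, smul_mul_assoc, smul_zero, add_zero,
    h₂ _ (ι_mul_ι_mul_ι_left_eq_zero _ _), h₂ _ (ι_mul_ι_mul_ι_right_eq_zero _ _),
    h₃ _ (ι_mul_ι_mul_ι_left_eq_zero _ _), h₃ _ (ι_mul_ι_mul_ι_right_eq_zero _ _)]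

/-- As `a₁ ∧ ω ∧ ω = 2 a₁ ∧ a₂ ∧ b₂ ∧ a₃ ∧ b₃`, only the `b₁`-component of the vector survives;
symmetrically for `b₁`. -/
theorem ι_mul_ι_mul_darbouxForm_mul_self {w : M}
    (hw : ι R w * (ι R a₂ * ι R b₂ * (ι R a₃ * ι R b₃)) = 0) (x y : R) :
    ι R a₁ * ι R (x • a₁ + y • b₁ + w) *
        (darbouxForm R a₁ b₁ a₂ b₂ a₃ b₃ * darbouxForm R a₁ b₁ a₂ b₂ a₃ b₃) =
      (2 * y) • (ι R a₁ * ι R b₁ * (ι R a₂ * ι R b₂ * (ι R a₃ * ι R b₃))) ∧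
    ι R b₁ * ι R (x • a₁ + y • b₁ + w) *
        (darbouxForm R a₁ b₁ a₂ b₂ a₃ b₃ * darbouxForm R a₁ b₁ a₂ b₂ a₃ b₃) =
      -(2 * x) • (ι R a₁ * ι R b₁ * (ι R a₂ * ι R b₂ * (ι R a₃ * ι R b₃))) := by
  have hw' (u : M) : ι R w * (ι R u * (ι R a₂ * ι R b₂ * (ι R a₃ * ι R b₃))) = 0 := by
    rw [ι_mul_left_anticomm, hw, mul_zero, neg_zero]
  constructor
  · rw [ι_mul_ι_anticomm, neg_mul, mul_assoc,
      ι_mul_darbouxForm_mul_self _ _ _ _ _ _ (ι_mul_ι_mul_ι_left_eq_zero _ _), mul_smul_comm,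
      map_add, map_add, map_smul, map_smul, add_mul, add_mul, smul_mul_assoc, smul_mul_assoc, hw',
      ← mul_assoc (ι R a₁) (ι R a₁), ι_sq_zero, zero_mul, ι_mul_left_anticomm,
      ← mul_assoc (ι R a₁) (ι R b₁)]
    module
  · rw [ι_mul_ι_anticomm, neg_mul, mul_assoc,
      ι_mul_darbouxForm_mul_self _ _ _ _ _ _ (ι_mul_ι_mul_ι_right_eq_zero _ _), mul_smul_comm,
      map_add, map_add, map_smul, map_smul, add_mul, add_mul, smul_mul_assoc, smul_mul_assoc, hw',
      ← mul_assoc (ι R b₁) (ι R b₁), ι_sq_zero, zero_mul, ← mul_assoc (ι R a₁) (ι R b₁)]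
    module

end Darboux

section Field

variable {K V : Type*} [Field K] [NeZero (2 : K)] [AddCommGroup V] [Module K V]

theorem eq_zero_and_eq_zero_of_ι_mul_darbouxForm_mul_self_eq_zero (a₁ b₁ a₂ b₂ a₃ b₃ : V)
    (x y : K) (hvol : ι K a₁ * ι K b₁ * (ι K a₂ * ι K b₂ * (ι K a₃ * ι K b₃)) ≠ 0) {w : V}
    (hw : ι K w * (ι K a₂ * ι K b₂ * (ι K a₃ * ι K b₃)) = 0) {v : V}
    (hv : v = x • a₁ + y • b₁ + w) {ω : ExteriorAlgebra K V}
    (hω : ω = darbouxForm K a₁ b₁ a₂ b₂ a₃ b₃) (h : ι K v * (ω * ω) = 0) :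
    x = 0 ∧ y = 0 := by
  obtain ⟨ha, hb⟩ := ι_mul_ι_mul_darbouxForm_mul_self a₁ b₁ a₂ b₂ a₃ b₃ hw x y
  rw [← hv, ← hω, mul_assoc, h, mul_zero, eq_comm, smul_eq_zero] at ha hb
  exact ⟨by simpa [hvol, two_ne_zero] using hb, by simpa [hvol, two_ne_zero] using ha⟩

theorem eq_zero_of_ι_mul_darbouxForm_mul_self_eq_zero (η : Basis (Fin 6) K V) {v : V}
    (h : ι K v * (darbouxForm K (η 0) (η 1) (η 2) (η 3) (η 4) (η 5) *
      darbouxForm K (η 0) (η 1) (η 2) (η 3) (η 4) (η 5)) = 0) :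
    v = 0 := by
  have hvol : ι K (η 0) * ι K (η 1) * (ι K (η 2) * ι K (η 3) * (ι K (η 4) * ι K (η 5))) ≠ 0 := by
    have := ιMulti_basis_ne_zero η
    simp only [ιMulti_apply, List.ofFn_succ, List.ofFn_zero, List.prod_cons, List.prod_nil,
      mul_one] at this
    simpa [mul_assoc] using this
  obtain ⟨c, rfl⟩ : ∃ c : Fin 6 → K, v = ∑ i, c i • η i := ⟨η.repr v, (η.sum_repr v).symm⟩
  rw [Fin.sum_univ_six] at h
  obtain ⟨h0, h1⟩ := eq_zero_and_eq_zero_of_ι_mul_darbouxForm_mul_self_eq_zero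
    (η 0) (η 1) (η 2) (η 3) (η 4) (η 5) (c 0) (c 1) hvol
    (ι_mul_pair_mul_pair_eq_zero _ _ _ _ (c 2) (c 3) (c 4) (c 5)) (by abel) rfl h
  obtain ⟨h2, h3⟩ := eq_zero_and_eq_zero_of_ι_mul_darbouxForm_mul_self_eq_zero
    (η 2) (η 3) (η 0) (η 1) (η 4) (η 5) (c 2) (c 3)
    (by rwa [(commute_ι_mul_ι _ _ _).left_comm])
    (ι_mul_pair_mul_pair_eq_zero _ _ _ _ (c 0) (c 1) (c 4) (c 5)) (by abel)
    (by simp only [darbouxForm]; abel) h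
  obtain ⟨h4, h5⟩ := eq_zero_and_eq_zero_of_ι_mul_darbouxForm_mul_self_eq_zero
    (η 4) (η 5) (η 0) (η 1) (η 2) (η 3) (c 4) (c 5)
    (by rwa [(commute_ι_mul_ι (η 4) (η 5) _).eq, mul_assoc])
    (ι_mul_pair_mul_pair_eq_zero _ _ _ _ (c 0) (c 1) (c 2) (c 3)) (by abel)
    (by simp only [darbouxForm]; abel) h
  simp [Fin.sum_univ_six, h0, h1, h2, h3, h4, h5]

end Field

end ExteriorAlgebra

/-- The 6-dimensional solvable Lie algebra `(0, 12, 13, 14, 15, 16)`,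
i.e. with `de¹ = 0` and `deⁱ = e¹ ∧ eⁱ` for `i = 2,…,6`, admits no half-flat
SU(3)-structure: there is no SU(3)-structure `(ω, ψ⁺)` with `dψ⁺ = 0` and `d(ω∧ω) = 0`. -/
theorem stmt_5
    (d : ExteriorAlgebra ℝ (Fin 6 → ℝ) →ₗ[ℝ] ExteriorAlgebra ℝ (Fin 6 → ℝ))
    -- `d` is an antiderivation (Leibniz rule with respect to the grading)
    (hleib : ∀ (p : ℕ) (x : ExteriorAlgebra ℝ (Fin 6 → ℝ)),
      x ∈ (LinearMap.range (ι ℝ (M := Fin 6 → ℝ))) ^ p →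
      ∀ y, d (x * y) = d x * y + ((-1 : ℝ)) ^ p • (x * d y))
    -- structure equations of (0, 12, 13, 14, 15, 16)
    (h0 : d (e 0) = 0)
    (hi : ∀ i : Fin 6, i ≠ 0 → d (e i) = e 0 * e i) :
    ¬ ∃ ω ψ : ExteriorAlgebra ℝ (Fin 6 → ℝ),
        IsSU3 ω ψ ∧ d ψ = 0 ∧ d (ω * ω) = 0 := by
  rintro ⟨ω, _, ⟨η, hω, -⟩, -, hdωω⟩
  have hd_ι : ∀ m, d (ι ℝ m) = e 0 * ι ℝ m := by
    have : d ∘ₗ ι ℝ = LinearMap.mulLeft ℝ (e 0) ∘ₗ ι ℝ := by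
      refine (Pi.basisFun ℝ (Fin 6)).ext fun i => ?_
      by_cases hi0 : i = 0
      · subst hi0
        simpa [e, ι_sq_zero] using h0
      · simpa [e] using hi i hi0
    exact fun m => LinearMap.congr_fun this m
  have hω2 : ω ∈ ⋀[ℝ]^2 (Fin 6 → ℝ) := by
    rw [hω]
    exact darbouxForm_mem_exteriorPower_two (η 0) (η 1) (η 2) (η 3) (η 4) (η 5)
  have hd_sq := map_eq_smul_ι_mul_of_mem_exteriorPower d hleib _ hd_ι
    (SetLike.mul_mem_graded hω2 hω2)
  rw [hdωω, eq_comm, smul_eq_zero, hω] at hd_sq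
  have he0 := eq_zero_of_ι_mul_darbouxForm_mul_self_eq_zero η
    (hd_sq.resolve_left (by norm_num))
  simpa using congrFun he0 0
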